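/- Let A = (A_j)_{j≥1} be a partition of ℝ^d into cubes of side length s ∈ (0,1], X := [-1,1]^d, and r ≥ s/2. Then for every j ∈ J_F^r the infinite-sample histogram rule classifies the cell A_j correctly: P_X((X_1 △ {h_{P,s} ≥ 0}) ∩ A_j) = 0. Consequently, the approximation error on F_r vanishes: R_{L_{F_r},P}(h_{P,s}) − R*_{L_{F_r},P} = 0 and hence inf_{f∈F} R_{L_{F_r},P}(f) = R*_{L_{F_r},P}. -/

import Mathlib

open MeasureTheory Set Metric
open scoped Classical ENNReal NNReal

noncomputable section

namespace RefinedMargin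

abbrev Pt (d : ℕ) := Fin d → ℝ

/-- The input space `X = [-1,1]^d` (with the supremum norm coming from `Fin d → ℝ`). -/
def cubeX (d : ℕ) : Set (Pt d) := Set.Icc (fun _ => (-1 : ℝ)) (fun _ => (1 : ℝ))

variable {d : ℕ} {s : ℝ}

/-- `X_1 = {x ∈ X : η x > 1/2}`. -/
def X1 (η : Pt d → ℝ) : Set (Pt d) := {x | x ∈ cubeX d ∧ 1 / 2 < η x}

/-- `X_{-1} = {x ∈ X : η x < 1/2}`. -/
def Xm1 (η : Pt d → ℝ) : Set (Pt d) := {x | x ∈ cubeX d ∧ η x < 1 / 2}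

/-- `X_0 = {x ∈ X : η x = 1/2}`. -/
def X0 (η : Pt d → ℝ) : Set (Pt d) := {x | x ∈ cubeX d ∧ η x = 1 / 2}

/-- Distance to the decision boundary. -/
def Δ (η : Pt d → ℝ) (x : Pt d) : ℝ :=
  if x ∈ Xm1 η then Metric.infDist x (X1 η)
  else if x ∈ X1 η then Metric.infDist x (Xm1 η)
  else 0

/-- Relative boundary of `T` in `X`. -/
def relBoundary (X T : Set (Pt d)) : Set (Pt d) := closure T ∩ closure (X \ T) ∩ X

/-- `T` is `m`-rectifiable: the image of a bounded subset of `ℝ^m` under a Lipschitz map. -/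
def IsRectifiable (m : ℕ) (T : Set (Pt d)) : Prop :=
  ∃ (B : Set (Fin m → ℝ)) (g : (Fin m → ℝ) → Pt d) (K : NNReal),
    Bornology.IsBounded B ∧ LipschitzOnWith K g B ∧ g '' B = T

/-- Margin exponent `α` with constant `cME`. -/
def HasME (μ : Measure (Pt d)) (η : Pt d → ℝ) (α cME : ℝ) : Prop :=
  ∀ t : ℝ, 0 < t → μ {x | Δ η x < t} ≤ ENNReal.ofReal ((cME * t) ^ α)

/-- Margin-noise exponent `β` with constant `cMNE`. -/
def HasMNE (μ : Measure (Pt d)) (η : Pt d → ℝ) (β cMNE : ℝ) : Prop :=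
  ∀ t : ℝ, 0 < t → (∫ x in {x | Δ η x < t}, |2 * η x - 1| ∂μ) ≤ (cMNE * t) ^ β

/-- The distance to the decision boundary controls the noise from below with
exponent `γ` and constant `cLC`. -/
def LowerControl (μ : Measure (Pt d)) (η : Pt d → ℝ) (γ cLC : ℝ) : Prop :=
  ∀ᵐ x ∂μ, Δ η x ^ γ ≤ cLC * |2 * η x - 1|

/-- A partition of `ℝ^d` into (half-open) cubes of side length `s`. -/
structure CubePartition (d : ℕ) (s : ℝ) where
  cell : ℕ → Set (Pt d)
  isCube : ∀ j, ∃ a : Pt d, cell j = {x | ∀ i, a i ≤ x i ∧ x i < a i + s}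
  covers : ∀ x : Pt d, ∃! j, x ∈ cell j

namespace CubePartition

/-- Index of the unique cell containing `x`. -/
def idx (𝒜 : CubePartition d s) (x : Pt d) : ℕ := (𝒜.covers x).choose

/-- The unique cell `A(x)` containing `x`. -/
def cellOf (𝒜 : CubePartition d s) (x : Pt d) : Set (Pt d) := 𝒜.cell (𝒜.idx x)

/-- Indices of cells intersecting `X`. -/
def J (𝒜 : CubePartition d s) : Set ℕ := {j | (𝒜.cell j ∩ cubeX d).Nonempty}

/-- Indices of cells near the decision boundary. -/
def JN (𝒜 : CubePartition d s) (η : Pt d → ℝ) (r : ℝ) : Set ℕ :=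
  {j | j ∈ 𝒜.J ∧ ∀ x ∈ 𝒜.cell j ∩ cubeX d, Δ η x ≤ 3 * r}

/-- Indices of cells far from the decision boundary. -/
def JF (𝒜 : CubePartition d s) (η : Pt d → ℝ) (r : ℝ) : Set ℕ :=
  {j | j ∈ 𝒜.J ∧ ∀ x ∈ 𝒜.cell j ∩ cubeX d, r ≤ Δ η x}

/-- `N_r`, the union of the cells near the decision boundary. -/
def Nr (𝒜 : CubePartition d s) (η : Pt d → ℝ) (r : ℝ) : Set (Pt d) := ⋃ j ∈ 𝒜.JN η r, 𝒜.cell j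

/-- `F_r`, the union of the cells far from the decision boundary. -/
def Fr (𝒜 : CubePartition d s) (η : Pt d → ℝ) (r : ℝ) : Set (Pt d) := ⋃ j ∈ 𝒜.JF η r, 𝒜.cell j

end CubePartition

/-- `sign` with the convention `sign 0 = 1`. -/
def sgn (t : ℝ) : ℝ := if 0 ≤ t then 1 else -1

/-- The classification loss `L(y,t) = 1_{(-∞,0]}(y · sign t)`. -/
def cLoss (y t : ℝ) : ℝ := if y * sgn t ≤ 0 then 1 else 0

/-- The restricted classification loss `L_T(x,y,t) = 1_T(x) L(y,t)`. -/
def rLoss (T : Set (Pt d)) (x : Pt d) (y t : ℝ) : ℝ := if x ∈ T then cLoss y t else 0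

/-- The joint distribution `P` on `X × {-1,1} ⊆ ℝ^d × ℝ` built from the marginal `μ = P_X`
and the posterior probability `η`. -/
def joint (μ : Measure (Pt d)) (η : Pt d → ℝ) : Measure (Pt d × ℝ) :=
  μ.bind fun x =>
    ENNReal.ofReal (η x) • Measure.dirac (x, 1) + ENNReal.ofReal (1 - η x) • Measure.dirac (x, -1)

/-- The risk `R_{L_T,P}(f)`. -/
def risk (P : Measure (Pt d × ℝ)) (T : Set (Pt d)) (f : Pt d → ℝ) : ℝ :=
  ∫ z, rLoss T z.1 z.2 (f z.1) ∂P

/-- The Bayes risk `R*_{L_T,P}`, the infimum over all measurable functions. -/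
def bayesRisk (P : Measure (Pt d × ℝ)) (T : Set (Pt d)) : ℝ :=
  ⨅ f : { f : Pt d → ℝ // Measurable f }, risk P T f.1

/-- The Bayes decision function `sign (2η - 1)`. -/
def bayesF (η : Pt d → ℝ) (x : Pt d) : ℝ := sgn (2 * η x - 1)

/-- The empirical risk of `f` on the dataset `D` for the restricted loss `L_T`. -/
def empRisk {n : ℕ} (D : Fin n → Pt d × ℝ) (T : Set (Pt d)) (f : Pt d → ℝ) : ℝ :=
  (∑ i, rLoss T (D i).1 (D i).2 (f (D i).1)) / (n : ℝ)

/-- `f_{D,s}`. -/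
def fHat (𝒜 : CubePartition d s) {n : ℕ} (D : Fin n → Pt d × ℝ) (x : Pt d) : ℝ :=
  ((∑ i, if (D i).2 = 1 ∧ (D i).1 ∈ 𝒜.cellOf x then (1 : ℝ) else 0) -
      ∑ i, if (D i).2 = -1 ∧ (D i).1 ∈ 𝒜.cellOf x then (1 : ℝ) else 0) / (n : ℝ)

/-- The empirical histogram rule `h_{D,s} = sign f_{D,s}`. -/
def histRule (𝒜 : CubePartition d s) {n : ℕ} (D : Fin n → Pt d × ℝ) (x : Pt d) : ℝ :=
  sgn (fHat 𝒜 D x)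

/-- `f_{P,s}`. -/
def fBar (𝒜 : CubePartition d s) (P : Measure (Pt d × ℝ)) (x : Pt d) : ℝ :=
  (P (𝒜.cellOf x ×ˢ ({1} : Set ℝ))).toReal - (P (𝒜.cellOf x ×ˢ ({-1} : Set ℝ))).toReal

/-- The infinite-sample histogram rule `h_{P,s} = sign f_{P,s}`. -/
def histRuleP (𝒜 : CubePartition d s) (P : Measure (Pt d × ℝ)) (x : Pt d) : ℝ :=
  sgn (fBar 𝒜 P x)

/-- The class `𝓕` of `±1`-valued functions which are constant on the cells meeting `X`
(and `0` elsewhere). -/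
def histClass (𝒜 : CubePartition d s) : Set (Pt d → ℝ) :=
  {f | ∃ c : ℕ → ℝ, (∀ j, c j = 1 ∨ c j = -1) ∧
    ∀ x, f x = if 𝒜.idx x ∈ 𝒜.J then c (𝒜.idx x) else 0}

/-- The `n`-fold product measure `P^n`. -/
def Pn (μ : Measure (Pt d)) (η : Pt d → ℝ) (n : ℕ) : Measure (Fin n → Pt d × ℝ) :=
  Measure.pi fun _ => joint μ η

/-!
Two points of a cell `A_j` are closer than `s ≤ 2r`. If `A_j ∩ X` met both `X_1` and `X_{-1}`,
the midpoint of two such points would lie in `A_j ∩ X` at distance `< r` from both classes,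
contradicting `Δ_η ≥ r` there. So `2η - 1` has constant sign on `A_j ∩ X`, and
`f_{P,s} = ∫_{A_j} (2η - 1) dP_X` on `A_j` has that sign too: `h_{P,s}` is the Bayes classifier
on `F_r` up to a `P_X`-null set. The inner risk of the classification loss is minimal exactly
for predictions of the right sign, so `h_{P,s}` is Bayes-optimal for `L_{F_r}`; being constant on
cells, it agrees on `F_r` with a member of `F`.
-/

lemma setIntegral_pos_of_ae_pos {α : Type*} [MeasurableSpace α] {μ : Measure α} {A : Set α}
    {f : α → ℝ} (hA : μ A ≠ 0) (hfi : IntegrableOn f A μ) (hf : ∀ᵐ x ∂μ.restrict A, 0 < f x) :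
    0 < ∫ x in A, f x ∂μ := by
  rw [integral_pos_iff_support_of_nonneg_ae (hf.mono fun _ hx => hx.le) hfi,
    measure_congr (Filter.eventuallyEq_univ.2
      (show Function.support f ∈ ae (μ.restrict A) from hf.mono fun _ hx => hx.ne')),
    Measure.restrict_apply_univ]
  exact pos_iff_ne_zero.2 hA

lemma sgn_eq_one_or_eq_neg_one (t : ℝ) : sgn t = 1 ∨ sgn t = -1 := by
  unfold sgn; split_ifs <;> simp

lemma sgn_nonneg_iff {t : ℝ} : 0 ≤ sgn t ↔ 0 ≤ t := by
  unfold sgn; split_ifs with h <;> simp [h]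

lemma measurable_sgn : Measurable sgn :=
  Measurable.ite measurableSet_Ici measurable_const measurable_const

lemma rLoss_nonneg (T : Set (Pt d)) (x : Pt d) (y t : ℝ) : 0 ≤ rLoss T x y t := by
  unfold rLoss cLoss; split_ifs <;> norm_num

lemma measurable_rLoss {T : Set (Pt d)} (hT : MeasurableSet T) {f : Pt d → ℝ}
    (hf : Measurable f) : Measurable fun z : Pt d × ℝ => rLoss T z.1 z.2 (f z.1) :=
  Measurable.ite (hT.preimage measurable_fst)
    (Measurable.ite
      (measurableSet_le (measurable_snd.mul ((measurable_sgn.comp hf).comp measurable_fst))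
        measurable_const) measurable_const measurable_const)
    measurable_const

def innerRisk (p t : ℝ) : ℝ≥0∞ :=
  ENNReal.ofReal p * ENNReal.ofReal (cLoss 1 t) +
    ENNReal.ofReal (1 - p) * ENNReal.ofReal (cLoss (-1) t)

def innerBayesRisk (p : ℝ) : ℝ≥0∞ := min (ENNReal.ofReal p) (ENNReal.ofReal (1 - p))

lemma innerRisk_eq_ite (p t : ℝ) :
    innerRisk p t = if 0 ≤ t then ENNReal.ofReal (1 - p) else ENNReal.ofReal p := by
  unfold innerRisk cLoss sgn; split_ifs <;> norm_num at *

lemma innerRisk_le_one {p : ℝ} (hp : p ∈ Icc (0 : ℝ) 1) (t : ℝ) : innerRisk p t ≤ 1 := by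
  rw [innerRisk_eq_ite]; split_ifs
  · exact ENNReal.ofReal_le_one.2 (by linarith [hp.1])
  · exact ENNReal.ofReal_le_one.2 hp.2

lemma innerBayesRisk_le_innerRisk (p t : ℝ) : innerBayesRisk p ≤ innerRisk p t := by
  rw [innerRisk_eq_ite]; split_ifs
  · exact min_le_right _ _
  · exact min_le_left _ _

lemma innerRisk_eq_innerBayesRisk {p t : ℝ} (h : 1 / 2 < p ↔ 0 ≤ t) :
    innerRisk p t = innerBayesRisk p := by
  rw [innerRisk_eq_ite, innerBayesRisk]; split_ifs with ht
  · exact (min_eq_right (ENNReal.ofReal_le_ofReal (by linarith [h.2 ht]))).symm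
  · exact (min_eq_left (ENNReal.ofReal_le_ofReal (by linarith [mt h.1 ht]))).symm

section Joint

variable {η : Pt d → ℝ} {μ : Measure (Pt d)}

lemma measurable_jointKernel (hη : Measurable η) :
    Measurable fun x : Pt d => ENNReal.ofReal (η x) • Measure.dirac (x, (1 : ℝ)) +
      ENNReal.ofReal (1 - η x) • Measure.dirac (x, (-1 : ℝ)) := by
  refine Measure.measurable_of_measurable_coe _ fun t ht => ?_
  simp only [Measure.coe_add, Pi.add_apply, Measure.smul_apply, smul_eq_mul,
    Measure.dirac_apply' _ ht]
  have hind (c : ℝ) : Measurable fun x : Pt d => t.indicator (1 : Pt d × ℝ → ℝ≥0∞) (x, c) :=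
    (measurable_one.indicator ht).comp (measurable_id.prodMk measurable_const)
  exact ((hη.ennreal_ofReal).mul (hind 1)).add
    (((hη.const_sub 1).ennreal_ofReal).mul (hind (-1)))

lemma lintegral_joint (hη : Measurable η) {F : Pt d × ℝ → ℝ≥0∞} (hF : Measurable F) :
    ∫⁻ z, F z ∂joint μ η =
      ∫⁻ x, ENNReal.ofReal (η x) * F (x, 1) + ENNReal.ofReal (1 - η x) * F (x, -1) ∂μ := by
  rw [joint, Measure.lintegral_bind (measurable_jointKernel hη).aemeasurable hF.aemeasurable]
  simp only [lintegral_add_measure, lintegral_smul_measure, lintegral_dirac, smul_eq_mul]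

lemma joint_prod_singleton_one (hη : Measurable η) {B : Set (Pt d)} (hB : MeasurableSet B) :
    joint μ η (B ×ˢ {1}) = ∫⁻ x in B, ENNReal.ofReal (η x) ∂μ := by
  rw [← lintegral_indicator_one (hB.prod (measurableSet_singleton 1)),
    lintegral_joint hη (measurable_one.indicator (hB.prod (measurableSet_singleton 1))),
    ← lintegral_indicator hB]
  congr 1; ext x
  by_cases hx : x ∈ B <;> simp [hx, show (-1 : ℝ) ≠ 1 by norm_num]

lemma joint_prod_singleton_neg_one (hη : Measurable η) {B : Set (Pt d)} (hB : MeasurableSet B) :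
    joint μ η (B ×ˢ {-1}) = ∫⁻ x in B, ENNReal.ofReal (1 - η x) ∂μ := by
  rw [← lintegral_indicator_one (hB.prod (measurableSet_singleton (-1))),
    lintegral_joint hη (measurable_one.indicator (hB.prod (measurableSet_singleton (-1)))),
    ← lintegral_indicator hB]
  congr 1; ext x
  by_cases hx : x ∈ B <;> simp [hx, show (1 : ℝ) ≠ -1 by norm_num]

lemma risk_joint (hη : Measurable η) {T : Set (Pt d)} (hT : MeasurableSet T) {f : Pt d → ℝ}
    (hf : Measurable f) :
    risk (joint μ η) T f = (∫⁻ x in T, innerRisk (η x) (f x) ∂μ).toReal := by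
  rw [risk, integral_eq_lintegral_of_nonneg_ae (ae_of_all _ fun z => rLoss_nonneg _ _ _ _)
      (measurable_rLoss hT hf).aestronglyMeasurable,
    lintegral_joint hη (measurable_rLoss hT hf).ennreal_ofReal, ← lintegral_indicator hT]
  congr 2; ext x
  by_cases hx : x ∈ T <;> simp [hx, rLoss, innerRisk]

end Joint

section BayesRisk

variable {P : Measure (Pt d × ℝ)} {T : Set (Pt d)}

lemma risk_nonneg (f : Pt d → ℝ) : 0 ≤ risk P T f :=
  integral_nonneg fun _ => rLoss_nonneg _ _ _ _

lemma risk_congr {f g : Pt d → ℝ} (hfg : ∀ x ∈ T, f x = g x) : risk P T f = risk P T g := by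
  unfold risk rLoss
  congr 1; ext z
  split_ifs with hz
  · rw [hfg _ hz]
  · rfl

lemma bddBelow_range_risk {ι : Type*} (f : ι → Pt d → ℝ) :
    BddBelow (range fun i => risk P T (f i)) :=
  ⟨0, by rintro _ ⟨i, rfl⟩; exact risk_nonneg (f i)⟩

lemma bayesRisk_le_risk {f : Pt d → ℝ} (hf : Measurable f) : bayesRisk P T ≤ risk P T f :=
  ciInf_le (bddBelow_range_risk Subtype.val) ⟨f, hf⟩

lemma iInf_risk_eq_bayesRisk {𝓕 : Set (Pt d → ℝ)} (h𝓕 : ∀ f ∈ 𝓕, Measurable f)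
    {f₀ : Pt d → ℝ} (hf₀ : f₀ ∈ 𝓕) (hopt : risk P T f₀ = bayesRisk P T) :
    ⨅ f : 𝓕, risk P T f = bayesRisk P T := by
  have : Nonempty 𝓕 := ⟨⟨f₀, hf₀⟩⟩
  refine le_antisymm ?_ (le_ciInf fun f => bayesRisk_le_risk (h𝓕 f f.2))
  exact hopt ▸ ciInf_le (bddBelow_range_risk _) (⟨f₀, hf₀⟩ : 𝓕)

variable {η : Pt d → ℝ} {μ : Measure (Pt d)} [IsFiniteMeasure μ]

lemma risk_eq_bayesRisk_of_measure_symmDiff_eq_zero (hμX : μ (cubeX d)ᶜ = 0)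
    (hη : ∀ x, η x ∈ Icc (0 : ℝ) 1) (hmeasη : Measurable η) (hT : MeasurableSet T)
    {f : Pt d → ℝ} (hf : Measurable f) (hfT : μ (symmDiff (X1 η) {x | 0 ≤ f x} ∩ T) = 0) :
    risk (joint μ η) T f = bayesRisk (joint μ η) T := by
  have hbayes : ∀ᵐ x ∂μ, x ∈ T → (1 / 2 < η x ↔ 0 ≤ f x) := by
    filter_upwards [ae_iff.2 hμX, measure_eq_zero_iff_ae_notMem.1 hfT] with x hxX hxf hxT
    simpa [X1, Set.mem_symmDiff, hxX, hxT, iff_iff_implies_and_implies] using hxf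
  have : Nonempty {f : Pt d → ℝ // Measurable f} := ⟨⟨0, measurable_const⟩⟩
  refine le_antisymm (le_ciInf fun g => ?_) (bayesRisk_le_risk hf)
  rw [risk_joint hmeasη hT hf, risk_joint hmeasη hT g.2]
  have hfinite : ∫⁻ x in T, innerRisk (η x) (g.1 x) ∂μ ≠ ⊤ :=
    ne_top_of_le_ne_top (measure_ne_top μ T)
      ((lintegral_mono fun x => innerRisk_le_one (hη x) _).trans_eq (setLIntegral_one T))
  refine ENNReal.toReal_mono hfinite ?_
  calc ∫⁻ x in T, innerRisk (η x) (f x) ∂μ = ∫⁻ x in T, innerBayesRisk (η x) ∂μ :=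
        setLIntegral_congr_fun_ae hT
          (hbayes.mono fun x hx hxT => innerRisk_eq_innerBayesRisk (hx hxT))
    _ ≤ ∫⁻ x in T, innerRisk (η x) (g.1 x) ∂μ :=
        lintegral_mono fun x => innerBayesRisk_le_innerRisk _ _

end BayesRisk

namespace CubePartition

variable (𝒜 : CubePartition d s)

lemma exists_cell_eq_pi (j : ℕ) :
    ∃ a : Pt d, 𝒜.cell j = univ.pi fun i => Ico (a i) (a i + s) := by
  obtain ⟨a, ha⟩ := 𝒜.isCube j
  exact ⟨a, by ext x; simp [ha]⟩

lemma measurableSet_cell (j : ℕ) : MeasurableSet (𝒜.cell j) := by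
  obtain ⟨a, ha⟩ := 𝒜.exists_cell_eq_pi j
  exact ha ▸ MeasurableSet.univ_pi fun _ => measurableSet_Ico

lemma convex_cell (j : ℕ) : Convex ℝ (𝒜.cell j) := by
  obtain ⟨a, ha⟩ := 𝒜.exists_cell_eq_pi j
  exact ha ▸ convex_pi fun _ _ => convex_Ico _ _

lemma dist_lt_of_mem_cell (hs : 0 < s) {j : ℕ} {x y : Pt d} (hx : x ∈ 𝒜.cell j)
    (hy : y ∈ 𝒜.cell j) : dist x y < s := by
  obtain ⟨a, ha⟩ := 𝒜.exists_cell_eq_pi j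
  rw [ha, Set.mem_univ_pi] at hx hy
  refine (dist_pi_lt_iff hs).2 fun i => ?_
  rw [Real.dist_eq, abs_lt]
  constructor <;> linarith [(hx i).1, (hx i).2, (hy i).1, (hy i).2]

lemma idx_eq_of_mem {x : Pt d} {j : ℕ} (hx : x ∈ 𝒜.cell j) : 𝒜.idx x = j :=
  ((𝒜.covers x).choose_spec.2 j hx).symm

lemma cellOf_eq_of_mem {x : Pt d} {j : ℕ} (hx : x ∈ 𝒜.cell j) : 𝒜.cellOf x = 𝒜.cell j := by
  rw [cellOf, 𝒜.idx_eq_of_mem hx]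

lemma measurable_idx : Measurable 𝒜.idx := by
  refine measurable_to_countable' fun j => ?_
  have : 𝒜.idx ⁻¹' {j} = 𝒜.cell j := by
    ext x
    refine ⟨fun hx => ?_, 𝒜.idx_eq_of_mem⟩
    exact (show 𝒜.idx x = j from hx) ▸ (𝒜.covers x).choose_spec.1
  exact this ▸ 𝒜.measurableSet_cell j

lemma measurable_comp_idx {β : Type*} [MeasurableSpace β] (c : ℕ → β) :
    Measurable fun x => c (𝒜.idx x) :=
  (measurable_of_countable c).comp 𝒜.measurable_idx

lemma measurableSet_Fr (η : Pt d → ℝ) (r : ℝ) : MeasurableSet (𝒜.Fr η r) :=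
  MeasurableSet.biUnion (to_countable _) fun j _ => 𝒜.measurableSet_cell j

lemma idx_mem_J_of_mem_Fr {η : Pt d → ℝ} {r : ℝ} {x : Pt d} (hx : x ∈ 𝒜.Fr η r) :
    𝒜.idx x ∈ 𝒜.J := by
  obtain ⟨j, hj, hxj⟩ := mem_iUnion₂.1 hx
  exact 𝒜.idx_eq_of_mem hxj ▸ hj.1

end CubePartition

section Boundary

variable {η : Pt d → ℝ}

lemma mem_X1_or_mem_Xm1_of_pos_Δ {x : Pt d} (hx : 0 < Δ η x) : x ∈ X1 η ∨ x ∈ Xm1 η := by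
  by_contra! h
  rw [Δ, if_neg h.2, if_neg h.1] at hx
  exact lt_irrefl 0 hx

lemma Δ_le_max_dist {x y : Pt d} (hx : x ∈ Xm1 η) (hy : y ∈ X1 η) (z : Pt d) :
    Δ η z ≤ max (dist z x) (dist z y) := by
  unfold Δ
  split_ifs
  · exact (infDist_le_dist_of_mem hy).trans (le_max_right _ _)
  · exact (infDist_le_dist_of_mem hx).trans (le_max_left _ _)
  · exact dist_nonneg.trans (le_max_left _ _)

lemma subset_X1_or_subset_Xm1 {C : Set (Pt d)} {r : ℝ} (hC : Convex ℝ C)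
    (hdiam : ∀ x ∈ C, ∀ y ∈ C, dist x y < 2 * r) (hΔ : ∀ x ∈ C ∩ cubeX d, r ≤ Δ η x) :
    C ∩ cubeX d ⊆ X1 η ∨ C ∩ cubeX d ⊆ Xm1 η := by
  by_contra! h
  obtain ⟨x, hx, hx1⟩ := not_subset.1 h.1
  obtain ⟨y, hy, hym1⟩ := not_subset.1 h.2
  have hr : 0 < r := by linarith [dist_self x ▸ hdiam x hx.1 x hx.1]
  have hxm1 : x ∈ Xm1 η :=
    (mem_X1_or_mem_Xm1_of_pos_Δ (hr.trans_le (hΔ x hx))).resolve_left hx1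
  have hy1 : y ∈ X1 η :=
    (mem_X1_or_mem_Xm1_of_pos_Δ (hr.trans_le (hΔ y hy))).resolve_right hym1
  set m := midpoint ℝ x y
  have hm : m ∈ C ∩ cubeX d :=
    ⟨hC.midpoint_mem hx.1 hy.1, (convex_Icc _ _).midpoint_mem hx.2 hy.2⟩
  have hmx : dist m x < r := by
    rw [dist_midpoint_left]; norm_num; linarith [hdiam x hx.1 y hy.1]
  have hmy : dist m y < r := by
    rw [dist_midpoint_right]; norm_num; linarith [hdiam x hx.1 y hy.1]
  exact absurd (hΔ m hm) (not_le.2 ((Δ_le_max_dist hxm1 hy1 m).trans_lt (max_lt hmx hmy)))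

lemma CubePartition.cell_inter_subset_X1_or_subset_Xm1 (𝒜 : CubePartition d s) (hs : 0 < s)
    {r : ℝ} (hr : s / 2 ≤ r) {j : ℕ} (hj : j ∈ 𝒜.JF η r) :
    𝒜.cell j ∩ cubeX d ⊆ X1 η ∨ 𝒜.cell j ∩ cubeX d ⊆ Xm1 η :=
  subset_X1_or_subset_Xm1 (𝒜.convex_cell j)
    (fun x hx y hy => (𝒜.dist_lt_of_mem_cell hs hx hy).trans_le (by linarith)) hj.2

end Boundary

section HistogramRule

variable {η : Pt d → ℝ} {μ : Measure (Pt d)} [IsFiniteMeasure μ] (𝒜 : CubePartition d s)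

lemma measurable_histRuleP (P : Measure (Pt d × ℝ)) : Measurable (histRuleP 𝒜 P) :=
  𝒜.measurable_comp_idx fun j =>
    sgn ((P (𝒜.cell j ×ˢ {1})).toReal - (P (𝒜.cell j ×ˢ {-1})).toReal)

lemma exists_mem_histClass_eq_histRuleP (P : Measure (Pt d × ℝ)) :
    ∃ f ∈ histClass 𝒜, ∀ x, 𝒜.idx x ∈ 𝒜.J → f x = histRuleP 𝒜 P x := by
  set c : ℕ → ℝ := fun j => sgn ((P (𝒜.cell j ×ˢ {1})).toReal - (P (𝒜.cell j ×ˢ {-1})).toReal)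
  exact ⟨fun x => if 𝒜.idx x ∈ 𝒜.J then c (𝒜.idx x) else 0,
    ⟨c, fun j => sgn_eq_one_or_eq_neg_one _, fun _ => rfl⟩, fun x hx => if_pos hx⟩

lemma measurable_of_mem_histClass {f : Pt d → ℝ} (hf : f ∈ histClass 𝒜) : Measurable f := by
  obtain ⟨c, -, hfc⟩ := hf
  exact funext hfc ▸ 𝒜.measurable_comp_idx fun j => if j ∈ 𝒜.J then c j else 0

lemma fBar_joint (hη : ∀ x, η x ∈ Icc (0 : ℝ) 1) (hmeasη : Measurable η) {j : ℕ} {x : Pt d}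
    (hx : x ∈ 𝒜.cell j) : fBar 𝒜 (joint μ η) x = ∫ y in 𝒜.cell j, (2 * η y - 1) ∂μ := by
  have hA := 𝒜.measurableSet_cell j
  have hint : Integrable η μ :=
    Integrable.of_mem_Icc 0 1 hmeasη.aemeasurable (ae_of_all _ hη)
  rw [fBar, 𝒜.cellOf_eq_of_mem hx, joint_prod_singleton_one hmeasη hA,
    joint_prod_singleton_neg_one hmeasη hA,
    ← integral_eq_lintegral_of_nonneg_ae (ae_of_all _ fun y => (hη y).1)
      hmeasη.aestronglyMeasurable,
    ← integral_eq_lintegral_of_nonneg_ae (ae_of_all _ fun y => sub_nonneg.2 (hη y).2)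
      (hmeasη.const_sub 1).aestronglyMeasurable,
    ← integral_sub hint.integrableOn
      (show Integrable (fun y => 1 - η y) μ from (integrable_const 1).sub hint).integrableOn]
  exact setIntegral_congr_fun hA fun y _ => by ring

end HistogramRule

section CellClassification

variable {η : Pt d → ℝ} {μ : Measure (Pt d)} [IsFiniteMeasure μ] (𝒜 : CubePartition d s)

lemma symmDiff_inter_subset_compl_cubeX {A : Set (Pt d)} {f : Pt d → ℝ}
    (hA : ∀ x ∈ A ∩ cubeX d, x ∈ X1 η ↔ 0 ≤ f x) :
    symmDiff (X1 η) {x | 0 ≤ f x} ∩ A ⊆ (cubeX d)ᶜ := by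
  rintro x ⟨hxd, hxA⟩ hxX
  simp only [Set.mem_symmDiff, mem_ofPred_eq, hA x ⟨hxA, hxX⟩] at hxd
  tauto

lemma measure_symmDiff_X1_histRuleP_inter_cell_eq_zero (hμX : μ (cubeX d)ᶜ = 0)
    (hη : ∀ x, η x ∈ Icc (0 : ℝ) 1) (hmeasη : Measurable η) (hs : 0 < s) {r : ℝ}
    (hr : s / 2 ≤ r) {j : ℕ} (hj : j ∈ 𝒜.JF η r) :
    μ (symmDiff (X1 η) {x | 0 ≤ histRuleP 𝒜 (joint μ η) x} ∩ 𝒜.cell j) = 0 := by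
  set A := 𝒜.cell j
  by_cases hA0 : μ A = 0
  · exact measure_mono_null inter_subset_right hA0
  have hA := 𝒜.measurableSet_cell j
  have hAX : ∀ᵐ y ∂μ.restrict A, y ∈ A ∩ cubeX d :=
    (ae_restrict_mem hA).and (ae_restrict_of_ae (ae_iff.2 hμX))
  have hsign : ∀ x ∈ A,
      0 ≤ histRuleP 𝒜 (joint μ η) x ↔ 0 ≤ ∫ y in A, (2 * η y - 1) ∂μ := fun x hx => by
    rw [histRuleP, sgn_nonneg_iff, fBar_joint 𝒜 hη hmeasη hx]
  refine measure_mono_null (symmDiff_inter_subset_compl_cubeX fun x hx => ?_) hμX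
  rw [hsign x hx.1]
  rcases 𝒜.cell_inter_subset_X1_or_subset_Xm1 hs hr hj with hsub | hsub
  · exact iff_of_true (hsub hx) (integral_nonneg_of_ae (hAX.mono fun y hy =>
      show (0 : ℝ) ≤ 2 * η y - 1 by linarith [(hsub hy).2]))
  · have hint : IntegrableOn (fun y => -(2 * η y - 1)) A μ :=
      (Integrable.of_mem_Icc (X := fun y => -(2 * η y - 1)) (-1) 1 (by fun_prop)
        (ae_of_all _ fun y => ⟨by linarith [(hη y).2], by linarith [(hη y).1]⟩)).integrableOn
    have hneg := setIntegral_pos_of_ae_pos hA0 hint (hAX.mono fun y hy => by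
      linarith [(hsub hy).2])
    rw [integral_neg] at hneg
    exact iff_of_false (fun h => by linarith [(hsub hx).2, h.2]) (by linarith)

end CellClassification

theorem statement12_general (d : ℕ) (s : ℝ) (hs : s ∈ Set.Ioc (0 : ℝ) 1)
    (𝒜 : CubePartition d s)
    (μ : Measure (Pt d)) [IsProbabilityMeasure μ] (hμX : μ (cubeX d)ᶜ = 0)
    (η : Pt d → ℝ) (hη : ∀ x, η x ∈ Set.Icc (0 : ℝ) 1) (hmeasη : Measurable η)
    (r : ℝ) (hr : s / 2 ≤ r) :
    (∀ j ∈ 𝒜.JF η r,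
        μ (symmDiff (X1 η) {x | 0 ≤ histRuleP 𝒜 (joint μ η) x} ∩ 𝒜.cell j) = 0) ∧
      risk (joint μ η) (𝒜.Fr η r) (histRuleP 𝒜 (joint μ η)) -
          bayesRisk (joint μ η) (𝒜.Fr η r) = 0 ∧
      (⨅ f : ↥(histClass 𝒜), risk (joint μ η) (𝒜.Fr η r) f.1) =
        bayesRisk (joint μ η) (𝒜.Fr η r) := by
  set h := histRuleP 𝒜 (joint μ η)
  have hcells : ∀ j ∈ 𝒜.JF η r, μ (symmDiff (X1 η) {x | 0 ≤ h x} ∩ 𝒜.cell j) = 0 :=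
    fun j hj => measure_symmDiff_X1_histRuleP_inter_cell_eq_zero 𝒜 hμX hη hmeasη hs.1 hr hj
  have hFr : μ (symmDiff (X1 η) {x | 0 ≤ h x} ∩ 𝒜.Fr η r) = 0 := by
    rw [CubePartition.Fr, inter_iUnion₂]
    exact (measure_biUnion_null_iff (to_countable _)).2 hcells
  have hopt : risk (joint μ η) (𝒜.Fr η r) h = bayesRisk (joint μ η) (𝒜.Fr η r) :=
    risk_eq_bayesRisk_of_measure_symmDiff_eq_zero hμX hη hmeasη (𝒜.measurableSet_Fr η r)
      (measurable_histRuleP 𝒜 _) hFr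
  obtain ⟨f₀, hf₀, hf₀h⟩ := exists_mem_histClass_eq_histRuleP 𝒜 (joint μ η)
  refine ⟨hcells, sub_eq_zero.2 hopt, iInf_risk_eq_bayesRisk
    (fun f hf => measurable_of_mem_histClass 𝒜 hf) hf₀ ?_⟩
  exact (risk_congr fun x hx => hf₀h x (𝒜.idx_mem_J_of_mem_Fr hx)).trans hopt

theorem statement12 (d : ℕ) (hd : 1 ≤ d) (s : ℝ) (hs : s ∈ Set.Ioc (0 : ℝ) 1)
    (𝒜 : CubePartition d s)
    (μ : Measure (Pt d)) [IsProbabilityMeasure μ] (hμX : μ (cubeX d)ᶜ = 0)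
    (η : Pt d → ℝ) (hη : ∀ x, η x ∈ Set.Icc (0 : ℝ) 1) (hmeasη : Measurable η)
    (r : ℝ) (hr : s / 2 ≤ r) :
    (∀ j ∈ 𝒜.JF η r,
        μ (symmDiff (X1 η) {x | 0 ≤ histRuleP 𝒜 (joint μ η) x} ∩ 𝒜.cell j) = 0) ∧
      risk (joint μ η) (𝒜.Fr η r) (histRuleP 𝒜 (joint μ η)) -
          bayesRisk (joint μ η) (𝒜.Fr η r) = 0 ∧
      (⨅ f : ↥(histClass 𝒜), risk (joint μ η) (𝒜.Fr η r) f.1) =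
        bayesRisk (joint μ η) (𝒜.Fr η r) :=
  statement12_general d s hs 𝒜 μ hμX η hη hmeasη r hr

end RefinedMargin
end
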